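/- arXiv:1204.5883 — 3 statements merged into one kernel-verified Lean document; each statement's English description precedes it below -/
import Mathlib

section
/- There exists a constant C > 0 such that for all convex non-decreasing functions f₁, f₂ : [0,1] → ℝ whose right derivatives are bounded above by 1, the lengths of their graphs γ₁, γ₂ ⊂ ℝ² satisfy |ℋ¹(γ₁) − ℋ¹(γ₂)| ≤ C · sup_{x ∈ [0,1]} |f₁(x) − f₂(x)|. -/
open MeasureTheory Metric Set
open scoped ENNReal NNReal

noncomputable section

/-- `ℝ^d` as Euclidean space. -/
abbrev Pt (d : ℕ) := EuclideanSpace ℝ (Fin d)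

/-- `L` is an affine line in `ℝ^d`. -/
def IsLine {d : ℕ} (L : Set (Pt d)) : Prop :=
  ∃ a v : Pt d, v ≠ 0 ∧ L = {x | ∃ t : ℝ, x = a + t • v}

/-- A tube of width `w` is the closed `w`-neighborhood of an affine line. -/
def IsTube {d : ℕ} (w : ℝ) (T : Set (Pt d)) : Prop :=
  ∃ L : Set (Pt d), IsLine L ∧ T = Metric.cthickening w L

/-- `A ⊆ ℝ^d` is tube null: for every `δ > 0` it is covered by countably many
tubes `T j` of widths `w j` with `∑ j, (w j)^(d-1) ≤ δ`. -/
def TubeNull (d : ℕ) (A : Set (Pt d)) : Prop :=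
  ∀ δ : ℝ, 0 < δ → ∃ (T : ℕ → Set (Pt d)) (w : ℕ → ℝ),
    (∀ n, 0 < w n ∧ IsTube (w n) (T n)) ∧ (A ⊆ ⋃ n, T n) ∧
    ∑' n, ENNReal.ofReal (w n) ^ (d - 1) ≤ ENNReal.ofReal δ

/-- The Hausdorff measure associated to the gauge function `h`. -/
def gMeasure {d : ℕ} (h : ℝ → ℝ) : Measure (Pt d) :=
  Measure.mkMetric (fun r : ℝ≥0∞ => ENNReal.ofReal (h r.toReal))

/-- The graph of `f` over `s ⊆ ℝ`, as a subset of `ℝ²`. -/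
def curveGraph (f : ℝ → ℝ) (s : Set ℝ) : Set (Pt 2) :=
  (fun t => (WithLp.toLp 2 ![t, f t] : Pt 2)) '' s


/-!
Each `fᵢ` is `1`-Lipschitz on `[0, 1)` (its slopes lie in `[0, 1]`) but may jump up at `1`;
its Lipschitz extension from `[0, 1)` is a convex `Fᵢ` whose graph differs from that of `fᵢ` in
one point. If `|F₁ - F₂| ≤ ε`, then `F₁ ≤ F₂ + ε`, and the nearest-point projection onto the
closed convex epigraph of `F₂ + ε` is `1`-Lipschitz. It maps the path that goes up the vertical
segment over `0`, along the graph of `F₁` and up the vertical segment over `1` into the graph of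
`F₂ + ε`, onto a connected set containing both of its endpoints, hence onto the whole graph. So
the graph of `F₂` is at most `2ε + 2ε` longer than that of `F₁`, and symmetrically.
-/

open scoped RealInnerProductSpace

section MetricProjection

variable {E : Type*} [NormedAddCommGroup E] [InnerProductSpace ℝ E]

theorem lipschitzWith_one_of_inner_nonpos {K : Set E} {P : E → E} (hPK : ∀ x, P x ∈ K)
    (hP : ∀ x, ∀ w ∈ K, ⟪x - P x, w - P x⟫ ≤ 0) : LipschitzWith 1 P := by
  refine LipschitzWith.of_dist_le_mul fun x y => ?_
  rw [NNReal.coe_one, one_mul, dist_eq_norm, dist_eq_norm]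
  -- Adding the variational inequalities at `x` and `y` gives `‖P x - P y‖² ≤ ⟪x - y, P x - P y⟫`.
  have hsq : ‖P x - P y‖ ^ 2 ≤ ‖x - y‖ * ‖P x - P y‖ := by
    have hx := hP x (P y) (hPK y)
    have hy := hP y (P x) (hPK x)
    have hsum : ⟪x - y, P x - P y⟫ - ‖P x - P y‖ ^ 2 =
        -(⟪x - P x, P y - P x⟫ + ⟪y - P y, P x - P y⟫) := by
      rw [← real_inner_self_eq_norm_sq]
      simp only [inner_sub_left, inner_sub_right, real_inner_comm]
      ring
    linarith [real_inner_le_norm (x - y) (P x - P y)]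
  rcases (norm_nonneg (P x - P y)).eq_or_lt with h | h
  · rw [← h]; exact norm_nonneg _
  · nlinarith

theorem IsComplete.exists_lipschitz_proj {K : Set E} (hK : IsComplete K) (hne : K.Nonempty)
    (hconv : Convex ℝ K) :
    ∃ P : E → E, LipschitzWith 1 P ∧ (∀ x ∈ K, P x = x) ∧
      ∀ x, P x ∈ K ∧ ∀ w ∈ K, ⟪x - P x, w - P x⟫ ≤ 0 := by
  choose P hPK hPmin using fun x => exists_norm_eq_iInf_of_complete_convex hne hK hconv x
  have hvar : ∀ x, ∀ w ∈ K, ⟪x - P x, w - P x⟫ ≤ 0 := fun x =>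
    (norm_eq_iInf_iff_real_inner_le_zero hconv (hPK x)).1 (hPmin x)
  refine ⟨P, lipschitzWith_one_of_inner_nonpos hPK hvar, fun x hx => ?_, fun x => ⟨hPK x, hvar x⟩⟩
  have := hvar x x hx
  rw [real_inner_self_eq_norm_sq, sq_nonpos_iff, norm_eq_zero, sub_eq_zero] at this
  exact this.symm

end MetricProjection

theorem ConvexOn.closure_of_continuousOn {E : Type*} [NormedAddCommGroup E] [NormedSpace ℝ E]
    {s : Set E} {f : E → ℝ} (hf : ConvexOn ℝ s f) (hc : ContinuousOn f (closure s)) :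
    ConvexOn ℝ (closure s) f := by
  refine ⟨hf.1.closure, fun x hx y hy a b ha hb hab => ?_⟩
  have hmaps : MapsTo (fun p : E × E => a • p.1 + b • p.2) (closure s ×ˢ closure s) (closure s) :=
    fun p hp => hf.1.closure hp.1 hp.2 ha hb hab
  refine le_on_closure (s := s ×ˢ s) (f := fun p : E × E => f (a • p.1 + b • p.2))
    (g := fun p => a • f p.1 + b • f p.2) (fun p hp => hf.2 hp.1 hp.2 ha hb hab) ?_ ?_
    (x := (x, y)) (by rw [closure_prod_eq]; exact ⟨hx, hy⟩)
  · rw [closure_prod_eq]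
    exact hc.comp (by fun_prop) hmaps
  · rw [closure_prod_eq]
    exact ((hc.comp continuousOn_fst fun p hp => hp.1).const_smul a).add
      ((hc.comp continuousOn_snd fun p hp => hp.2).const_smul b)

theorem ConvexOn.lipschitzOnWith_Ico {f : ℝ → ℝ} {a b : ℝ} (hcv : ConvexOn ℝ (Icc a b) f)
    (hm : MonotoneOn f (Icc a b)) (hd : ∀ t ∈ Ico a b, derivWithin f (Ioi t) t ≤ 1) :
    LipschitzOnWith 1 f (Ico a b) := by
  refine LipschitzOnWith.of_le_add fun x hx y hy => ?_
  rcases le_or_gt x y with hxy | hyx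
  · linarith [hm (Ico_subset_Icc_self hx) (Ico_subset_Icc_self hy) hxy,
      dist_nonneg (x := x) (y := y)]
  · have hx' : x ∈ interior (Icc a b) := by
      rw [interior_Icc]; exact ⟨hy.1.trans_lt hyx, hx.2⟩
    have hslope : slope f y x ≤ 1 :=
      (hcv.slope_le_leftDeriv_of_mem_interior (Ico_subset_Icc_self hy) hx' hyx).trans
        ((hcv.leftDeriv_le_rightDeriv_of_mem_interior hx').trans (hd x hx))
    rw [slope_def_field, div_le_one (sub_pos.2 hyx)] at hslope
    rw [Real.dist_eq, abs_of_pos (sub_pos.2 hyx)]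
    linarith

theorem ConvexOn.exists_lipschitzWith_eqOn_Ico {f : ℝ → ℝ} {K : ℝ≥0} {a b : ℝ} (hab : a < b)
    (hcv : ConvexOn ℝ (Icc a b) f) (hf : LipschitzOnWith K f (Ico a b)) :
    ∃ F : ℝ → ℝ, LipschitzWith K F ∧ EqOn f F (Ico a b) ∧ ConvexOn ℝ (Icc a b) F := by
  obtain ⟨F, hFlip, hfF⟩ := hf.extend_real
  refine ⟨F, hFlip, hfF, ?_⟩
  rw [← closure_Ico hab.ne]
  exact ((hcv.subset Ico_subset_Icc_self (convex_Ico a b)).congr hfF).closure_of_continuousOn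
    hFlip.continuous.continuousOn

theorem mem_curveGraph {f : ℝ → ℝ} {s : Set ℝ} {z : Pt 2} :
    z ∈ curveGraph f s ↔ z 0 ∈ s ∧ z 1 = f (z 0) := by
  constructor
  · rintro ⟨t, ht, rfl⟩
    simpa using ht
  · rintro ⟨hz0, hz1⟩
    refine ⟨z 0, hz0, ?_⟩
    ext i; fin_cases i <;> simp [hz1]

theorem curveGraph_congr {f g : ℝ → ℝ} {s : Set ℝ} (h : EqOn f g s) :
    curveGraph f s = curveGraph g s :=
  image_congr fun t ht => by rw [h ht]

theorem hausdorffMeasure_curveGraph_insert (f : ℝ → ℝ) (s : Set ℝ) (a : ℝ) :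
    μH[1] (curveGraph f (insert a s)) = μH[1] (curveGraph f s) := by
  have := Measure.nullSingletonClass_hausdorff (Pt 2) one_pos
  rw [curveGraph, image_insert_eq]
  exact measure_congr (insert_ae_eq_self _ _)

theorem hausdorffMeasure_curveGraph_add_const (f : ℝ → ℝ) (s : Set ℝ) (c : ℝ) :
    μH[1] (curveGraph (fun t => f t + c) s) = μH[1] (curveGraph f s) := by
  have : curveGraph (fun t => f t + c) s =
      IsometryEquiv.addRight (!₂[0, c] : Pt 2) '' curveGraph f s := by
    rw [curveGraph, curveGraph, image_image]
    refine image_congr fun t _ => ?_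
    ext i; fin_cases i <;> simp
  rw [this, IsometryEquiv.hausdorffMeasure_image]

theorem isometry_vertical (a : ℝ) : Isometry (fun y : ℝ => (!₂[a, y] : Pt 2)) :=
  Isometry.of_dist_eq fun x y => by
    simp [EuclideanSpace.dist_eq, Fin.sum_univ_two, Real.dist_eq, Real.sqrt_sq_eq_abs]

def verticalSegment (a c d : ℝ) : Set (Pt 2) :=
  (fun y : ℝ => (!₂[a, y] : Pt 2)) '' Icc c d

theorem hausdorffMeasure_verticalSegment (a c d : ℝ) :
    μH[1] (verticalSegment a c d) = ENNReal.ofReal (d - c) := by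
  rw [verticalSegment, (isometry_vertical a).hausdorffMeasure_image (Or.inl zero_le_one),
    hausdorffMeasure_real, Real.volume_Icc]

theorem isPreconnected_verticalSegment_union_curveGraph_union {φ : ℝ → ℝ} {a b c d : ℝ}
    (hab : a ≤ b) (hφ : ContinuousOn φ (Icc a b)) (hc : φ a ≤ c) (hd : φ b ≤ d) :
    IsPreconnected
      (verticalSegment a (φ a) c ∪ curveGraph φ (Icc a b) ∪ verticalSegment b (φ b) d) :=
  IsPreconnected.union !₂[b, φ b] (Or.inr ⟨b, right_mem_Icc.2 hab, rfl⟩)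
    ⟨φ b, left_mem_Icc.2 hd, rfl⟩
    (IsPreconnected.union !₂[a, φ a] ⟨φ a, left_mem_Icc.2 hc, rfl⟩
      ⟨a, left_mem_Icc.2 hab, rfl⟩
      (isPreconnected_Icc.image _ (isometry_vertical a).continuous.continuousOn)
      (isPreconnected_Icc.image _ (by fun_prop)))
    (isPreconnected_Icc.image _ (isometry_vertical b).continuous.continuousOn)

theorem LipschitzOnWith.hausdorffMeasure_curveGraph_Icc_lt_top {f : ℝ → ℝ} {K : ℝ≥0} {a b : ℝ}
    (hf : LipschitzOnWith K f (Icc a b)) : μH[1] (curveGraph f (Icc a b)) < ∞ := by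
  have hlip : LipschitzOnWith (1 + K) (fun t => (!₂[t, f t] : Pt 2)) (Icc a b) := by
    refine LipschitzOnWith.of_dist_le_mul fun x hx y hy => ?_
    have hfxy := hf.dist_le_mul x hx y hy
    rw [EuclideanSpace.dist_eq, Fin.sum_univ_two]
    simp only [Matrix.cons_val_zero, Matrix.cons_val_one, Real.dist_eq, sq_abs] at hfxy ⊢
    push_cast
    refine Real.sqrt_le_iff.2 ⟨by positivity, ?_⟩
    nlinarith [abs_nonneg (x - y), abs_nonneg (f x - f y), sq_abs (x - y), sq_abs (f x - f y), K.2]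
  calc μH[1] (curveGraph f (Icc a b)) ≤ ((1 + K : ℝ≥0) : ℝ≥0∞) ^ (1 : ℝ) * μH[1] (Icc a b) :=
        hlip.hausdorffMeasure_image_le zero_le_one
    _ < ∞ := by
        rw [hausdorffMeasure_real, Real.volume_Icc, ENNReal.rpow_one]
        exact ENNReal.mul_lt_top ENNReal.coe_lt_top ENNReal.ofReal_lt_top

theorem curveGraph_subset_of_isPreconnected {ψ : ℝ → ℝ} {a b : ℝ} {S : Set (Pt 2)}
    (hS : IsPreconnected S) (hSψ : S ⊆ curveGraph ψ (Icc a b)) (ha : !₂[a, ψ a] ∈ S)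
    (hb : !₂[b, ψ b] ∈ S) : curveGraph ψ (Icc a b) ⊆ S := by
  rintro _ ⟨x, hx, rfl⟩
  have hproj : IsPreconnected ((fun z : Pt 2 => z 0) '' S) :=
    hS.image _ (EuclideanSpace.proj (0 : Fin 2)).continuous.continuousOn
  obtain ⟨z, hzS, hz0⟩ := hproj.Icc_subset ⟨_, ha, by simp⟩ ⟨_, hb, by simp⟩ hx
  obtain ⟨-, hz1⟩ := mem_curveGraph.1 (hSψ hzS)
  convert hzS
  ext i; fin_cases i <;> simp [← hz0, hz1]

def planeEpigraph (ψ : ℝ → ℝ) (s : Set ℝ) : Set (Pt 2) :=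
  {z | z 0 ∈ s ∧ ψ (z 0) ≤ z 1}

def planeCoords : Pt 2 →L[ℝ] ℝ × ℝ :=
  (EuclideanSpace.proj (0 : Fin 2)).prod (EuclideanSpace.proj 1)

theorem planeEpigraph_eq_preimage (ψ : ℝ → ℝ) (s : Set ℝ) :
    planeEpigraph ψ s = planeCoords ⁻¹' {p : ℝ × ℝ | p.1 ∈ s ∧ ψ p.1 ≤ p.2} := rfl

theorem ContinuousOn.isClosed_planeEpigraph {ψ : ℝ → ℝ} {s : Set ℝ} (hs : IsClosed s)
    (hψ : ContinuousOn ψ s) : IsClosed (planeEpigraph ψ s) := by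
  rw [planeEpigraph_eq_preimage]
  exact (hs.epigraph hψ).preimage planeCoords.continuous

theorem ConvexOn.convex_planeEpigraph {ψ : ℝ → ℝ} {s : Set ℝ} (hψ : ConvexOn ℝ s ψ) :
    Convex ℝ (planeEpigraph ψ s) := by
  rw [planeEpigraph_eq_preimage]
  exact hψ.convex_epigraph.linear_preimage planeCoords.toLinearMap

/-- `hvar` says that `q` is the point of the epigraph nearest to `p`. -/
theorem mem_curveGraph_of_inner_nonpos {ψ : ℝ → ℝ} {s : Set ℝ} {p q : Pt 2}
    (hq : q ∈ planeEpigraph ψ s) (hvar : ∀ w ∈ planeEpigraph ψ s, ⟪p - q, w - q⟫ ≤ 0)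
    (hp0 : p 0 ∈ s) (hp1 : p 1 ≤ ψ (p 0)) : q ∈ curveGraph ψ s := by
  refine mem_curveGraph.2 ⟨hq.1, ?_⟩
  by_contra hne
  have hlt : ψ (q 0) < q 1 := lt_of_le_of_ne hq.2 (Ne.symm hne)
  have inner_eq (w : Pt 2) :
      ⟪p - q, w - q⟫ = (p 0 - q 0) * (w 0 - q 0) + (p 1 - q 1) * (w 1 - q 1) := by
    simp [PiLp.inner_apply, Fin.sum_univ_two, mul_comm]
  have h₁ := hvar !₂[q 0, ψ (q 0)] ⟨by simpa using hq.1, by simp⟩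
  have h₂ := hvar !₂[p 0, ψ (p 0)] ⟨by simpa using hp0, by simp⟩
  rw [inner_eq] at h₁ h₂
  simp only [Matrix.cons_val_zero, Matrix.cons_val_one, sub_self, mul_zero, zero_add] at h₁ h₂
  have hpq : q 1 ≤ p 1 := by nlinarith
  have : p 0 = q 0 := by nlinarith [sq_nonneg (p 0 - q 0)]
  rw [this] at hp1
  linarith

theorem hausdorffMeasure_curveGraph_le_of_le {φ ψ : ℝ → ℝ} {a b : ℝ} (hab : a ≤ b)
    (hφ : ContinuousOn φ (Icc a b)) (hψc : ContinuousOn ψ (Icc a b))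
    (hψ : ConvexOn ℝ (Icc a b) ψ) (hφψ : ∀ x ∈ Icc a b, φ x ≤ ψ x) :
    μH[1] (curveGraph ψ (Icc a b)) ≤ μH[1] (curveGraph φ (Icc a b)) +
      ENNReal.ofReal (ψ a - φ a) + ENNReal.ofReal (ψ b - φ b) := by
  have ha : a ∈ Icc a b := left_mem_Icc.2 hab
  have hb : b ∈ Icc a b := right_mem_Icc.2 hab
  have hmemK {x : ℝ} (hx : x ∈ Icc a b) : !₂[x, ψ x] ∈ planeEpigraph ψ (Icc a b) := by
    simpa [planeEpigraph] using hx
  obtain ⟨P, hPlip, hPfix, hP⟩ :=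
    (hψc.isClosed_planeEpigraph isClosed_Icc).isComplete.exists_lipschitz_proj ⟨_, hmemK ha⟩
      hψ.convex_planeEpigraph
  set T := verticalSegment a (φ a) (ψ a) ∪ curveGraph φ (Icc a b) ∪
    verticalSegment b (φ b) (ψ b)
  have hT : ∀ z ∈ T, z 0 ∈ Icc a b ∧ z 1 ≤ ψ (z 0) := by
    rintro _ ((⟨y, hy, rfl⟩ | ⟨x, hx, rfl⟩) | ⟨y, hy, rfl⟩)
    · simpa using ⟨hab, hy.2⟩
    · simpa using ⟨hx, hφψ x hx⟩
    · simpa using ⟨hab, hy.2⟩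
  have hPT : P '' T ⊆ curveGraph ψ (Icc a b) := by
    rintro _ ⟨z, hz, rfl⟩
    exact mem_curveGraph_of_inner_nonpos (hP z).1 (hP z).2 (hT z hz).1 (hT z hz).2
  have hgraph : curveGraph ψ (Icc a b) ⊆ P '' T :=
    curveGraph_subset_of_isPreconnected
      ((isPreconnected_verticalSegment_union_curveGraph_union hab hφ (hφψ a ha)
        (hφψ b hb)).image _ hPlip.continuous.continuousOn) hPT
      ⟨_, Or.inl (Or.inl ⟨ψ a, right_mem_Icc.2 (hφψ a ha), rfl⟩), hPfix _ (hmemK ha)⟩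
      ⟨_, Or.inr ⟨ψ b, right_mem_Icc.2 (hφψ b hb), rfl⟩, hPfix _ (hmemK hb)⟩
  calc μH[1] (curveGraph ψ (Icc a b)) ≤ μH[1] (P '' T) := measure_mono hgraph
    _ ≤ μH[1] T := by simpa using hPlip.hausdorffMeasure_image_le zero_le_one T
    _ ≤ μH[1] (verticalSegment a (φ a) (ψ a)) + μH[1] (curveGraph φ (Icc a b)) +
          μH[1] (verticalSegment b (φ b) (ψ b)) :=
        (measure_union_le _ _).trans (by gcongr; exact measure_union_le _ _)
    _ = _ := by
        rw [hausdorffMeasure_verticalSegment, hausdorffMeasure_verticalSegment,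
          add_comm (ENNReal.ofReal _)]

theorem hausdorffMeasure_curveGraph_Icc_eq_of_eqOn_Ico {f g : ℝ → ℝ} {a b : ℝ} (hab : a ≤ b)
    (h : EqOn f g (Ico a b)) :
    μH[1] (curveGraph f (Icc a b)) = μH[1] (curveGraph g (Icc a b)) := by
  rw [← Ico_insert_right hab, hausdorffMeasure_curveGraph_insert,
    hausdorffMeasure_curveGraph_insert, curveGraph_congr h]

theorem hausdorffMeasure_curveGraph_le_add_of_abs_sub_le {φ ψ : ℝ → ℝ} {a b ε : ℝ} (hab : a ≤ b)
    (hφ : ContinuousOn φ (Icc a b)) (hψc : ContinuousOn ψ (Icc a b))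
    (hψ : ConvexOn ℝ (Icc a b) ψ) (hε : ∀ x ∈ Icc a b, |φ x - ψ x| ≤ ε) :
    μH[1] (curveGraph ψ (Icc a b)) ≤ μH[1] (curveGraph φ (Icc a b)) + ENNReal.ofReal (4 * ε) := by
  have hgap (x : ℝ) (hx : x ∈ Icc a b) : ψ x + ε - φ x ≤ 2 * ε := by
    linarith [neg_abs_le (φ x - ψ x), hε x hx]
  have hε0 : 0 ≤ ε := (abs_nonneg _).trans (hε a (left_mem_Icc.2 hab))
  have key := hausdorffMeasure_curveGraph_le_of_le (ψ := fun x => ψ x + ε) hab hφ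
    (hψc.add continuousOn_const) (hψ.add_const ε)
    (fun x hx => by linarith [le_abs_self (φ x - ψ x), hε x hx])
  rw [hausdorffMeasure_curveGraph_add_const] at key
  refine key.trans ?_
  rw [show 4 * ε = 2 * ε + 2 * ε by ring, ENNReal.ofReal_add (by positivity) (by positivity),
    ← add_assoc]
  gcongr
  · exact hgap a (left_mem_Icc.2 hab)
  · exact hgap b (right_mem_Icc.2 hab)

theorem ENNReal.abs_toReal_sub_le_of_le_add {a b : ℝ≥0∞} {c : ℝ} (ha : a ≠ ∞) (hb : b ≠ ∞)
    (hc : 0 ≤ c) (hab : a ≤ b + ENNReal.ofReal c) (hba : b ≤ a + ENNReal.ofReal c) :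
    |a.toReal - b.toReal| ≤ c := by
  have h₁ := ENNReal.toReal_le_add hab hb ENNReal.ofReal_ne_top
  have h₂ := ENNReal.toReal_le_add hba ha ENNReal.ofReal_ne_top
  rw [ENNReal.toReal_ofReal hc] at h₁ h₂
  exact abs_sub_le_iff.2 ⟨by linarith, by linarith⟩

theorem MonotoneOn.bddAbove_range_abs_sub {f g : ℝ → ℝ} {a b : ℝ} (hf : MonotoneOn f (Icc a b))
    (hg : MonotoneOn g (Icc a b)) : BddAbove (range fun x : Icc a b => |f x - g x|) := by
  refine ⟨max (f b - g a) (g b - f a), ?_⟩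
  rintro _ ⟨⟨x, hx⟩, rfl⟩
  have hab : a ≤ b := hx.1.trans hx.2
  have ha : a ∈ Icc a b := left_mem_Icc.2 hab
  have hb : b ∈ Icc a b := right_mem_Icc.2 hab
  show |f x - g x| ≤ _
  exact abs_sub_le_iff.2
    ⟨le_max_of_le_left (by linarith [hf hx hb hx.2, hg ha hx hx.1]),
      le_max_of_le_right (by linarith [hg hx hb hx.2, hf ha hx hx.1])⟩

/-- Lemma 5.1 of the paper. -/
theorem statement9 :
    ∃ C : ℝ, 0 < C ∧ ∀ f₁ f₂ : ℝ → ℝ,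
      ConvexOn ℝ (Set.Icc 0 1) f₁ → MonotoneOn f₁ (Set.Icc 0 1) →
      (∀ t ∈ Set.Ico (0:ℝ) 1, derivWithin f₁ (Set.Ioi t) t ≤ 1) →
      ConvexOn ℝ (Set.Icc 0 1) f₂ → MonotoneOn f₂ (Set.Icc 0 1) →
      (∀ t ∈ Set.Ico (0:ℝ) 1, derivWithin f₂ (Set.Ioi t) t ≤ 1) →
      |(μH[1] (curveGraph f₁ (Set.Icc 0 1))).toReal -
        (μH[1] (curveGraph f₂ (Set.Icc 0 1))).toReal| ≤
        C * ⨆ x : Set.Icc (0:ℝ) 1, |f₁ x - f₂ x| := by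
  refine ⟨4, four_pos, fun f₁ f₂ hcv₁ hm₁ hd₁ hcv₂ hm₂ hd₂ => ?_⟩
  set ε := ⨆ x : Set.Icc (0:ℝ) 1, |f₁ x - f₂ x|
  have hε (x : ℝ) (hx : x ∈ Icc (0:ℝ) 1) : |f₁ x - f₂ x| ≤ ε :=
    le_ciSup (hm₁.bddAbove_range_abs_sub hm₂) ⟨x, hx⟩
  obtain ⟨F₁, hF₁, hfF₁, hcvF₁⟩ :=
    hcv₁.exists_lipschitzWith_eqOn_Ico one_pos (hcv₁.lipschitzOnWith_Ico hm₁ hd₁)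
  obtain ⟨F₂, hF₂, hfF₂, hcvF₂⟩ :=
    hcv₂.exists_lipschitzWith_eqOn_Ico one_pos (hcv₂.lipschitzOnWith_Ico hm₂ hd₂)
  have hF (x : ℝ) (hx : x ∈ Icc (0:ℝ) 1) : |F₁ x - F₂ x| ≤ ε := by
    rw [← closure_Ico zero_ne_one] at hx
    refine le_on_closure (f := fun y => |F₁ y - F₂ y|) (fun y hy => ?_)
      (hF₁.continuous.sub hF₂.continuous).abs.continuousOn continuousOn_const hx
    rw [← hfF₁ hy, ← hfF₂ hy]
    exact hε y (Ico_subset_Icc_self hy)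
  rw [hausdorffMeasure_curveGraph_Icc_eq_of_eqOn_Ico zero_le_one hfF₁,
    hausdorffMeasure_curveGraph_Icc_eq_of_eqOn_Ico zero_le_one hfF₂]
  refine ENNReal.abs_toReal_sub_le_of_le_add
    (hF₁.lipschitzOnWith.hausdorffMeasure_curveGraph_Icc_lt_top).ne
    (hF₂.lipschitzOnWith.hausdorffMeasure_curveGraph_Icc_lt_top).ne
    (by linarith [(abs_nonneg _).trans (hε 0 (left_mem_Icc.2 zero_le_one))]) ?_ ?_
  · exact hausdorffMeasure_curveGraph_le_add_of_abs_sub_le zero_le_one hF₂.continuous.continuousOn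
      hF₁.continuous.continuousOn hcvF₁ fun x hx => by rw [abs_sub_comm]; exact hF x hx
  · exact hausdorffMeasure_curveGraph_le_add_of_abs_sub_le zero_le_one hF₁.continuous.continuousOn
      hF₂.continuous.continuousOn hcvF₂ hF
end
end

section
/- There exists a constant C > 0 such that for every integer N ≥ 2 there exist a finite set Λ with #Λ ≤ N^{C·N} and a map P : 𝒞⁺ → Λ with the property that whenever f, g ∈ 𝒞⁺ satisfy P(f) = P(g), then D(f, g) ≤ C N^{-2}. -/
open MeasureTheory Metric Set
open scoped ENNReal NNReal

noncomputable section

/-- The family `𝒞⁺` of graphs of convex non-decreasing functions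
`f : [0,1] → [0,1]` whose right derivative is bounded above by `1`. -/
def CPlus : Set (Set (Pt 2)) :=
  {γ | ∃ f : ℝ → ℝ, ConvexOn ℝ (Set.Icc 0 1) f ∧ MonotoneOn f (Set.Icc 0 1) ∧
    (∀ x ∈ Set.Icc (0:ℝ) 1, f x ∈ Set.Icc (0:ℝ) 1) ∧
    (∀ t ∈ Set.Ico (0:ℝ) 1, derivWithin f (Set.Ioi t) t ≤ 1) ∧
    γ = curveGraph f (Set.Icc 0 1)}

/-!
A convex `f : [0,1] → [0,1]` with slopes in `[0,1]` is pinned down to within `O(N⁻²)` by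
`2N + 1` numbers: its values at the grid points `k / N` and the points `t_j` where its right
derivative passes the levels `(j + 1) / N`. Cutting `[u, x]` at the `t_j`, the slope of `f` on
the `i`-th piece lies in `[i / N, (i + 1) / N]`, so by Abel summation
`f x - f u = N⁻¹ ∑ⱼ |[u, x] ∩ (t_j, 1)| + O((x - u) / N)`, a discrete layer-cake formula.
Anchoring at `u = ⌊N x⌋ / N` and rounding the `2N + 1` numbers to precision `N⁻³` gives a code
with `(N³ + 1)^(2N + 1) ≤ N^(12N)` values such that equal codes force `|f - g| ≤ 3 N⁻²`
pointwise, hence also for the Hausdorff distance of the graphs.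
-/

open Filter Topology

theorem sum_range_mul_sub_eq (Q : ℕ → ℝ) (n : ℕ) :
    ∑ i ∈ Finset.range n, (i : ℝ) * (Q (i + 1) - Q i) =
      ∑ j ∈ Finset.range n, (Q n - Q (j + 1)) := by
  induction n with
  | zero => simp
  | succ n ih =>
    have hsplit : ∀ j, Q (n + 1) - Q (j + 1) = (Q n - Q (j + 1)) + (Q (n + 1) - Q n) :=
      fun j => by ring
    rw [Finset.sum_range_succ, ih, Finset.sum_range_succ _ n, sub_self, add_zero]
    simp only [hsplit, Finset.sum_add_distrib, Finset.sum_const, Finset.card_range, nsmul_eq_mul]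

theorem sub_sub_sum_div_mem_Icc {F Q : ℕ → ℝ} {n : ℕ} {c : ℝ}
    (hlow : ∀ i < n, i / c * (Q (i + 1) - Q i) ≤ F (i + 1) - F i)
    (hup : ∀ i < n, F (i + 1) - F i ≤ (i + 1) / c * (Q (i + 1) - Q i)) :
    F n - F 0 - (∑ j ∈ Finset.range n, (Q n - Q (j + 1))) / c ∈ Icc 0 ((Q n - Q 0) / c) := by
  rw [← sum_range_mul_sub_eq, ← Finset.sum_range_sub F, ← Finset.sum_range_sub Q,
    Finset.sum_div, Finset.sum_div, ← Finset.sum_sub_distrib]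
  constructor
  · refine Finset.sum_nonneg fun i hi => ?_
    have := hlow i (Finset.mem_range.1 hi)
    rw [mul_div_right_comm]
    linarith
  · refine Finset.sum_le_sum fun i hi => ?_
    have := hup i (Finset.mem_range.1 hi)
    have hsplit : (i + 1) / c * (Q (i + 1) - Q i) =
        i * (Q (i + 1) - Q i) / c + (Q (i + 1) - Q i) / c := by ring
    linarith

theorem abs_clamp_sub_clamp_le (u x a b : ℝ) :
    |max u (min a x) - max u (min b x)| ≤ |a - b| :=
  calc _ ≤ max |u - u| |min a x - min b x| := abs_max_sub_max_le_max _ _ _ _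
    _ ≤ max |u - u| (max |a - b| |x - x|) := by gcongr; exact abs_min_sub_min_le_max _ _ _ _
    _ = |a - b| := by simp

theorem le_max_min_of_max_min_lt {u t x : ℝ} (h : max u (min t x) < x) :
    t ≤ max u (min t x) := by
  have htx := (min_lt_iff.1 ((le_max_right _ _).trans_lt h)).resolve_right (lt_irrefl x)
  exact le_max_of_le_right (le_min le_rfl htx.le)

theorem max_min_le_of_lt_max_min {u t x : ℝ} (h : u < max u (min t x)) :
    max u (min t x) ≤ t := by
  rw [max_eq_right ((lt_max_iff.1 h).resolve_left (lt_irrefl u)).le]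
  exact min_le_left _ _

theorem ConvexOn.sub_le_mul_sub_of_rightDeriv_le {S : Set ℝ} {f : ℝ → ℝ} {a b c : ℝ}
    (hf : ConvexOn ℝ S f) (ha : a ∈ S) (hb : b ∈ interior S) (hab : a ≤ b)
    (hd : derivWithin f (Ioi b) b ≤ c) : f b - f a ≤ c * (b - a) := by
  rcases hab.eq_or_lt with rfl | hab
  · simp
  have hslope := (hf.slope_le_leftDeriv_of_mem_interior ha hb hab).trans
    ((hf.leftDeriv_le_rightDeriv_of_mem_interior hb).trans hd)
  rwa [slope_def_field, div_le_iff₀ (sub_pos.2 hab)] at hslope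

theorem dist_toLp_same_fst (t a b : ℝ) :
    dist (WithLp.toLp 2 ![t, a] : Pt 2) (WithLp.toLp 2 ![t, b]) = |a - b| := by
  simp [EuclideanSpace.dist_eq, Fin.sum_univ_two, Real.dist_eq, Real.sqrt_sq_eq_abs]

theorem hausdorffDist_curveGraph_le {f g : ℝ → ℝ} {s : Set ℝ} {r : ℝ} (hr : 0 ≤ r)
    (h : ∀ t ∈ s, |f t - g t| ≤ r) :
    hausdorffDist (curveGraph f s) (curveGraph g s) ≤ r := by
  refine hausdorffDist_le_of_mem_dist hr ?_ ?_ <;> rintro _ ⟨t, ht, rfl⟩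
  · exact ⟨_, mem_image_of_mem _ ht, (dist_toLp_same_fst t _ _).trans_le (h t ht)⟩
  · refine ⟨_, mem_image_of_mem _ ht, ?_⟩
    rw [dist_toLp_same_fst, abs_sub_comm]
    exact h t ht

namespace CPlusCode

section SlopeThreshold

variable {f : ℝ → ℝ} {r a b p : ℝ}

def steepSet (f : ℝ → ℝ) (r : ℝ) : Set ℝ :=
  {p | p ∈ Ico 0 1 ∧ ∀ y ∈ Ioo p 1, r * (y - p) < f y - f p}

/-- For convex `f`, the point where the right derivative of `f` passes the level `r`, or `1` if
it never does. -/
def slopeThreshold (f : ℝ → ℝ) (r : ℝ) : ℝ :=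
  sInf (insert 1 (steepSet f r))

theorem bddBelow_insert_steepSet : BddBelow (insert 1 (steepSet f r)) :=
  ⟨0, by rintro p (rfl | hp); exacts [zero_le_one, hp.1.1]⟩

theorem slopeThreshold_mem_Icc : slopeThreshold f r ∈ Icc 0 1 :=
  ⟨le_csInf (insert_nonempty _ _) (by rintro p (rfl | hp); exacts [zero_le_one, hp.1.1]),
    csInf_le bddBelow_insert_steepSet (mem_insert _ _)⟩

theorem steepSet_anti (f : ℝ → ℝ) : Antitone (steepSet f) :=
  fun _ _ hr _ ⟨hp, hslope⟩ => ⟨hp, fun y hy =>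
    (mul_le_mul_of_nonneg_right hr (sub_nonneg.2 hy.1.le)).trans_lt (hslope y hy)⟩

theorem slopeThreshold_mono (f : ℝ → ℝ) : Monotone (slopeThreshold f) :=
  fun _ _ hr => csInf_le_csInf bddBelow_insert_steepSet (insert_nonempty _ _)
    (insert_subset_insert (steepSet_anti f hr))

theorem mem_steepSet_of_le (hf : ConvexOn ℝ (Icc 0 1) f) {e : ℝ} (he : e ∈ steepSet f r)
    (hep : e ≤ p) (hp : p < 1) : p ∈ steepSet f r := by
  obtain ⟨⟨he0, -⟩, hslope⟩ := he
  refine ⟨⟨he0.trans hep, hp⟩, fun y ⟨hpy, hy1⟩ => ?_⟩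
  rcases hep.eq_or_lt with rfl | hep
  · exact hslope y ⟨hpy, hy1⟩
  have hey : r < (f y - f e) / (y - e) := by
    rw [lt_div_iff₀ (by linarith)]
    exact hslope y ⟨hep.trans hpy, hy1⟩
  have hsec : (f y - f e) / (y - e) ≤ (f y - f p) / (y - p) := by
    simpa only [← neg_sub (f y), ← neg_sub y, neg_div_neg_eq] using
      hf.secant_mono (a := y) (x := e) (y := p) ⟨by linarith, hy1.le⟩ ⟨he0, by linarith⟩
        ⟨by linarith, hp.le⟩ (by linarith) hpy.ne hep.le
  have := hey.trans_le hsec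
  rwa [lt_div_iff₀ (by linarith)] at this

theorem mem_steepSet_of_slopeThreshold_lt (hf : ConvexOn ℝ (Icc 0 1) f)
    (h : slopeThreshold f r < p) (hp : p < 1) : p ∈ steepSet f r := by
  obtain ⟨e, he, hep⟩ := exists_lt_of_csInf_lt (insert_nonempty _ _) h
  rcases he with rfl | he
  · linarith
  · exact mem_steepSet_of_le hf he hep.le hp

theorem notMem_steepSet_of_lt_slopeThreshold (h : p < slopeThreshold f r) : p ∉ steepSet f r :=
  fun hp => h.not_ge (csInf_le bddBelow_insert_steepSet (mem_insert_of_mem _ hp))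

theorem mul_sub_le_sub_of_slopeThreshold_le (hf : ConvexOn ℝ (Icc 0 1) f)
    (hm : MonotoneOn f (Icc 0 1)) (ht : slopeThreshold f r ≤ a) (ha : 0 ≤ a) (hab : a ≤ b)
    (hb : b < 1) : r * (b - a) ≤ f b - f a := by
  rcases hab.eq_or_lt with rfl | hab
  · simp
  have hlim : Tendsto (fun δ => f b - f a + r * δ) (𝓝[>] 0) (𝓝 (f b - f a)) :=
    tendsto_nhdsWithin_of_tendsto_nhds (Continuous.tendsto' (by fun_prop) _ _ (by simp))
  refine ge_of_tendsto hlim ?_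
  filter_upwards [Ioo_mem_nhdsGT (sub_pos.2 hab)] with δ ⟨hδ0, hδ⟩
  have hsteep := (mem_steepSet_of_slopeThreshold_lt (p := a + δ) hf (by linarith)
    (by linarith)).2 b ⟨by linarith, hb⟩
  have hmono : f a ≤ f (a + δ) := hm ⟨ha, by linarith⟩ ⟨by linarith, by linarith⟩ (by linarith)
  linarith

theorem sub_le_mul_sub_of_le_slopeThreshold (hf : ConvexOn ℝ (Icc 0 1) f)
    (ht : b ≤ slopeThreshold f r) (ha : 0 ≤ a) (hab : a ≤ b) (hb : b < 1) :
    f b - f a ≤ r * (b - a) := by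
  rcases hab.eq_or_lt with rfl | hab
  · simp
  have hb' : b ∈ interior (Icc 0 1) := by
    rw [interior_Icc]
    exact ⟨ha.trans_lt hab, hb⟩
  have hcont : ContinuousAt f b := hf.continuousOn_interior.continuousAt
    (isOpen_interior.mem_nhds hb')
  refine le_of_tendsto_of_tendsto (b := 𝓝[<] b)
    ((hcont.tendsto.sub_const (f a)).mono_left nhdsWithin_le_nhds)
    (tendsto_nhdsWithin_of_tendsto_nhds
      (Continuous.tendsto' (f := fun y => r * (y - a)) (by fun_prop) b _ rfl)) ?_
  -- `y ∈ (a, b)` is not steep: some chord from `y` has slope `≤ r`, hence so does `[a, y]`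
  filter_upwards [Ioo_mem_nhdsLT hab] with y ⟨hay, hyb⟩
  have hy := notMem_steepSet_of_lt_slopeThreshold (hyb.trans_le ht)
  simp only [steepSet, mem_ofPred_eq, not_and, not_forall, not_lt] at hy
  obtain ⟨z, hz, hzy⟩ := hy ⟨by linarith, by linarith⟩
  have hadj := hf.slope_mono_adjacent ⟨ha, by linarith⟩ ⟨by linarith [hz.1], hz.2.le⟩ hay hz.1
  rw [div_le_div_iff₀ (by linarith) (by linarith [hz.1])] at hadj
  nlinarith [hz.1]

theorem slopeThreshold_one
    (hlip : ∀ ⦃a b : ℝ⦄, 0 ≤ a → a ≤ b → b < 1 → f b - f a ≤ b - a) :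
    slopeThreshold f 1 = 1 := by
  suffices steepSet f 1 = ∅ by simp [slopeThreshold, this]
  refine eq_empty_of_forall_notMem fun p ⟨⟨hp0, hp1⟩, hslope⟩ => ?_
  have hy : (p + 1) / 2 ∈ Ioo p 1 := ⟨by linarith, by linarith⟩
  linarith [hslope _ hy, hlip hp0 hy.1.le hy.2]

end SlopeThreshold

structure CPlusFun (f : ℝ → ℝ) : Prop where
  convexOn : ConvexOn ℝ (Icc 0 1) f
  monotoneOn : MonotoneOn f (Icc 0 1)
  mapsTo : MapsTo f (Icc 0 1) (Icc 0 1)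
  sub_le : ∀ ⦃a b : ℝ⦄, 0 ≤ a → a ≤ b → b < 1 → f b - f a ≤ b - a

theorem exists_cplusFun_of_mem_CPlus {γ : Set (Pt 2)} (hγ : γ ∈ CPlus) :
    ∃ f, CPlusFun f ∧ γ = curveGraph f (Icc 0 1) := by
  obtain ⟨f, hc, hm, hmaps, hd, rfl⟩ := hγ
  refine ⟨f, ⟨hc, hm, hmaps, fun a b ha hab hb => ?_⟩, rfl⟩
  rcases hab.eq_or_lt with rfl | hab'
  · simp
  have hb' : b ∈ interior (Icc (0 : ℝ) 1) := by
    rw [interior_Icc]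
    exact ⟨ha.trans_lt hab', hb⟩
  simpa using hc.sub_le_mul_sub_of_rightDeriv_le ⟨ha, by linarith⟩ hb' hab
    (hd b ⟨by linarith, hb⟩)

/-- `∑ⱼ |{s ∈ [u, x] : f'(s) > (j + 1) / N}|`: the integral `∫ᵤˣ f'` sliced into horizontal
layers of height `1 / N`, up to the factor `1 / N`. -/
def layerSum (f : ℝ → ℝ) (N : ℕ) (u x : ℝ) : ℝ :=
  ∑ j ∈ Finset.range N, (x - max u (min (slopeThreshold f ((j + 1) / N)) x))

section CutPoints

variable {f : ℝ → ℝ} {N : ℕ} {u x : ℝ}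

def cutPoint (f : ℝ → ℝ) (N : ℕ) (u x : ℝ) : ℕ → ℝ
  | 0 => u
  | i + 1 => max u (min (slopeThreshold f ((i + 1 : ℕ) / N)) x)

theorem cutPoint_mem_Icc (hux : u ≤ x) : ∀ i, cutPoint f N u x i ∈ Icc u x
  | 0 => ⟨le_rfl, hux⟩
  | _ + 1 => ⟨le_max_left _ _, max_le hux (min_le_right _ _)⟩

theorem cutPoint_le_succ (hux : u ≤ x) : ∀ i, cutPoint f N u x i ≤ cutPoint f N u x (i + 1)
  | 0 => (cutPoint_mem_Icc hux 1).1
  | i + 1 => by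
    simp only [cutPoint]
    gcongr
    exact slopeThreshold_mono f (by gcongr; simp)

theorem cutPoint_self (hlip : ∀ ⦃a b : ℝ⦄, 0 ≤ a → a ≤ b → b < 1 → f b - f a ≤ b - a)
    (hN : 0 < N) (hux : u ≤ x) (hx : x < 1) : cutPoint f N u x N = x := by
  obtain ⟨n, rfl⟩ := Nat.exists_eq_succ_of_ne_zero hN.ne'
  rw [cutPoint, div_self (by positivity), slopeThreshold_one hlip, min_eq_right hx.le,
    max_eq_right hux]

theorem mul_sub_le_sub_cutPoint (hf : CPlusFun f) (hu : 0 ≤ u) (hux : u ≤ x) (hx : x < 1)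
    (i : ℕ) : i / (N : ℝ) * (cutPoint f N u x (i + 1) - cutPoint f N u x i) ≤
      f (cutPoint f N u x (i + 1)) - f (cutPoint f N u x i) := by
  have hmem := cutPoint_mem_Icc (f := f) (N := N) hux
  rcases (cutPoint_le_succ (f := f) (N := N) hux i).eq_or_lt with heq | hlt
  · simp [heq]
  rcases i with _ | i
  · simpa [cutPoint] using sub_nonneg.2 (hf.monotoneOn ⟨hu, hux.trans hx.le⟩
      ⟨hu.trans (hmem 1).1, (hmem 1).2.trans hx.le⟩ (hmem 1).1)
  exact mul_sub_le_sub_of_slopeThreshold_le hf.convexOn hf.monotoneOn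
    (le_max_min_of_max_min_lt (hlt.trans_le (hmem _).2)) (hu.trans (hmem _).1) hlt.le
    ((hmem _).2.trans_lt hx)

theorem sub_cutPoint_le_mul_sub (hf : ConvexOn ℝ (Icc 0 1) f) (hu : 0 ≤ u) (hux : u ≤ x)
    (hx : x < 1) (i : ℕ) : f (cutPoint f N u x (i + 1)) - f (cutPoint f N u x i) ≤
      (i + 1) / (N : ℝ) * (cutPoint f N u x (i + 1) - cutPoint f N u x i) := by
  have hmem := cutPoint_mem_Icc (f := f) (N := N) hux
  rcases (cutPoint_le_succ (f := f) (N := N) hux i).eq_or_lt with heq | hlt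
  · simp [heq]
  refine sub_le_mul_sub_of_le_slopeThreshold hf ?_ (hu.trans (hmem _).1) hlt.le
    ((hmem _).2.trans_lt hx)
  exact_mod_cast max_min_le_of_lt_max_min ((hmem i).1.trans_lt hlt)

theorem layerSum_eq_sum_cutPoint :
    layerSum f N u x = ∑ j ∈ Finset.range N, (x - cutPoint f N u x (j + 1)) := by
  simp only [layerSum, cutPoint]
  push_cast
  rfl

end CutPoints

def quantize (M : ℕ) (a : ℝ) : Fin (M + 1) :=
  ⟨min ⌊M * a⌋₊ M, Nat.lt_succ_of_le (min_le_right _ _)⟩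

theorem abs_sub_le_of_quantize_eq {M : ℕ} {a b : ℝ} (hM : 0 < M) (ha : a ∈ Icc 0 1)
    (hb : b ∈ Icc 0 1) (h : quantize M a = quantize M b) : |a - b| ≤ 1 / M := by
  have hM' : (0 : ℝ) < M := by exact_mod_cast hM
  have hfloor {c : ℝ} (hc : c ∈ Icc 0 1) : ((quantize M c : ℕ) : ℤ) = ⌊(M : ℝ) * c⌋ := by
    change ((min ⌊(M : ℝ) * c⌋₊ M : ℕ) : ℤ) = _
    rw [min_eq_left (Nat.floor_le_of_le (by nlinarith [hc.2])),
      Int.natCast_floor_eq_floor (by nlinarith [hc.1])]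
  have hlt := Int.abs_sub_lt_one_of_floor_eq_floor (a := (M : ℝ) * a) (b := M * b)
    (by rw [← hfloor ha, ← hfloor hb, h])
  rw [← mul_sub, abs_mul, Nat.abs_cast, ← lt_div_iff₀' hM'] at hlt
  exact hlt.le

abbrev Code (N : ℕ) : Type :=
  (Fin (N + 1) → Fin (N ^ 3 + 1)) × (Fin N → Fin (N ^ 3 + 1))

def code (N : ℕ) (f : ℝ → ℝ) : Code N :=
  (fun k => quantize (N ^ 3) (f ((k : ℕ) / N)),
    fun j => quantize (N ^ 3) (slopeThreshold f (((j : ℕ) + 1) / N)))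

theorem card_code_le {N : ℕ} (hN : 2 ≤ N) :
    (Fintype.card (Code N) : ℝ) ≤ (N : ℝ) ^ ((12 : ℝ) * N) := by
  have hcard : Fintype.card (Code N) = (N ^ 3 + 1) ^ (2 * N + 1) := by
    simp only [Code, Fintype.card_prod, Fintype.card_fun, Fintype.card_fin]
    ring
  have hle : Fintype.card (Code N) ≤ N ^ (12 * N) := by
    calc Fintype.card (Code N) = (N ^ 3 + 1) ^ (2 * N + 1) := hcard
      _ ≤ (N ^ 4) ^ (2 * N + 1) := by gcongr; nlinarith [Nat.one_le_pow 3 N (by omega)]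
      _ = N ^ (4 * (2 * N + 1)) := by rw [← pow_mul]
      _ ≤ N ^ (12 * N) := Nat.pow_le_pow_right (by omega) (by omega)
  rw [show (12 : ℝ) * N = ((12 * N : ℕ) : ℝ) by push_cast; ring, Real.rpow_natCast]
  exact_mod_cast hle

section Comparison

variable {f g : ℝ → ℝ} {N : ℕ} {u x : ℝ}

theorem CPlusFun.sub_sub_layerSum_mem_Icc (hf : CPlusFun f) (hN : 0 < N) (hu : 0 ≤ u)
    (hux : u ≤ x) (hx : x < 1) :
    f x - f u - layerSum f N u x / N ∈ Icc 0 ((x - u) / N) := by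
  have h := sub_sub_sum_div_mem_Icc (F := fun i => f (cutPoint f N u x i)) (n := N) (c := N)
    (fun i _ => mul_sub_le_sub_cutPoint hf hu hux hx i)
    (fun i _ => sub_cutPoint_le_mul_sub hf.convexOn hu hux hx i)
  rwa [cutPoint_self hf.sub_le hN hux hx, ← layerSum_eq_sum_cutPoint] at h

theorem abs_layerSum_sub_le {δ : ℝ}
    (h : ∀ j < N, |slopeThreshold f ((j + 1) / N) - slopeThreshold g ((j + 1) / N)| ≤ δ) :
    |layerSum f N u x - layerSum g N u x| ≤ N * δ := by
  rw [layerSum, layerSum, ← Finset.sum_sub_distrib]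
  calc _ ≤ ∑ j ∈ Finset.range N,
        |slopeThreshold f ((j + 1) / N) - slopeThreshold g ((j + 1) / N)| :=
      (Finset.abs_sum_le_sum_abs _ _).trans (Finset.sum_le_sum fun j _ => by
        rw [sub_sub_sub_cancel_left, abs_sub_comm]
        exact abs_clamp_sub_clamp_le _ _ _ _)
    _ ≤ ∑ _j ∈ Finset.range N, δ := Finset.sum_le_sum fun j hj => h j (Finset.mem_range.1 hj)
    _ = N * δ := by simp

theorem abs_sub_le_of_anchor (hf : CPlusFun f) (hg : CPlusFun g) (hN : 0 < N) (hu : 0 ≤ u)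
    (hux : u ≤ x) (hx : x < 1) :
    |f x - g x| ≤ |f u - g u| + |layerSum f N u x - layerSum g N u x| / N + (x - u) / N := by
  obtain ⟨hf0, hf1⟩ := hf.sub_sub_layerSum_mem_Icc hN hu hux hx
  obtain ⟨hg0, hg1⟩ := hg.sub_sub_layerSum_mem_Icc hN hu hux hx
  have hL : |(layerSum f N u x - layerSum g N u x) / N| =
      |layerSum f N u x - layerSum g N u x| / N := by
    rw [abs_div, Nat.abs_cast]
  obtain ⟨hL1, hL2⟩ := abs_le.1 hL.le
  obtain ⟨hv1, hv2⟩ := abs_le.1 (le_refl |f u - g u|)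
  rw [sub_div] at hL1 hL2
  rw [abs_le]
  constructor <;> linarith

theorem abs_sub_le_of_grid (hf : CPlusFun f) (hg : CPlusFun g) (hN : 0 < N) {δ : ℝ}
    (hval : ∀ k ≤ N, |f (k / N) - g (k / N)| ≤ δ)
    (hthr : ∀ j < N, |slopeThreshold f ((j + 1) / N) - slopeThreshold g ((j + 1) / N)| ≤ δ)
    {t : ℝ} (ht : t ∈ Icc 0 1) : |f t - g t| ≤ 2 * δ + 1 / N ^ 2 := by
  have hN' : (0 : ℝ) < N := by exact_mod_cast hN
  have hδ : 0 ≤ δ := (abs_nonneg _).trans (hval 0 N.zero_le)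
  rcases ht.2.eq_or_lt with rfl | ht1
  · have h1 := hval N le_rfl
    rw [div_self hN'.ne'] at h1
    have : (0 : ℝ) ≤ 1 / N ^ 2 := by positivity
    linarith
  set k := ⌊(N : ℝ) * t⌋₊
  have hk : k < N := (Nat.floor_lt (by nlinarith [ht.1])).2 (by nlinarith)
  have hkt : (k : ℝ) / N ≤ t := by
    rw [div_le_iff₀ hN', mul_comm]
    exact Nat.floor_le (by nlinarith [ht.1])
  have htk : t - k / N ≤ 1 / N := by
    have := Nat.lt_floor_add_one ((N : ℝ) * t)
    rw [sub_le_iff_le_add, ← add_div, le_div_iff₀ hN']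
    linarith
  calc |f t - g t|
      ≤ |f (k / N) - g (k / N)| + |layerSum f N (k / N) t - layerSum g N (k / N) t| / N +
          (t - k / N) / N := abs_sub_le_of_anchor hf hg hN (by positivity) hkt ht1
    _ ≤ δ + N * δ / N + 1 / N / N := by
        gcongr
        exacts [hval k hk.le, abs_layerSum_sub_le hthr]
    _ = 2 * δ + 1 / N ^ 2 := by field_simp; ring

theorem CPlusFun.abs_sub_le_of_code_eq (hf : CPlusFun f) (hg : CPlusFun g) (hN : 0 < N)
    (h : code N f = code N g) {t : ℝ} (ht : t ∈ Icc 0 1) : |f t - g t| ≤ 3 / N ^ 2 := by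
  have hN' : (1 : ℝ) ≤ N := by exact_mod_cast hN
  have hM : 0 < N ^ 3 := by positivity
  have hval (k : ℕ) (hk : k ≤ N) : |f (k / N) - g (k / N)| ≤ 1 / N ^ 3 := by
    have hk' : (k : ℝ) / N ∈ Icc 0 1 :=
      ⟨by positivity, div_le_one_of_le₀ (by exact_mod_cast hk) (by positivity)⟩
    simpa using abs_sub_le_of_quantize_eq hM (hf.mapsTo hk') (hg.mapsTo hk')
      (congrFun (congrArg Prod.fst h) ⟨k, by omega⟩)
  have hthr (j : ℕ) (hj : j < N) :
      |slopeThreshold f ((j + 1) / N) - slopeThreshold g ((j + 1) / N)| ≤ 1 / N ^ 3 := by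
    simpa using abs_sub_le_of_quantize_eq hM slopeThreshold_mem_Icc slopeThreshold_mem_Icc
      (congrFun (congrArg Prod.snd h) ⟨j, hj⟩)
  calc |f t - g t| ≤ 2 * (1 / N ^ 3) + 1 / N ^ 2 := abs_sub_le_of_grid hf hg hN hval hthr ht
    _ ≤ 2 * (1 / N ^ 2) + 1 / N ^ 2 := by gcongr; norm_num
    _ = 3 / N ^ 2 := by ring

end Comparison

end CPlusCode

open CPlusCode

/-- Proposition 6.2 of the paper. -/
theorem statement12 :
    ∃ C : ℝ, 0 < C ∧ ∀ N : ℕ, 2 ≤ N →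
      ∃ m : ℕ, (m : ℝ) ≤ (N : ℝ) ^ (C * N) ∧
        ∃ P : Set (Pt 2) → Fin m,
          ∀ γ₁ ∈ CPlus, ∀ γ₂ ∈ CPlus, P γ₁ = P γ₂ →
            Metric.hausdorffDist γ₁ γ₂ ≤ C / (N : ℝ) ^ 2 := by
  have hsel (γ : Set (Pt 2)) : ∃ f, γ ∈ CPlus → CPlusFun f ∧ γ = curveGraph f (Icc 0 1) := by
    by_cases hγ : γ ∈ CPlus
    · exact (exists_cplusFun_of_mem_CPlus hγ).imp fun _ hf _ => hf
    · exact ⟨0, fun h => absurd h hγ⟩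
  choose F hF using hsel
  refine ⟨12, by norm_num, fun N hN => ⟨Fintype.card (Code N), card_code_le hN,
    fun γ => Fintype.equivFin _ (code N (F γ)), fun γ₁ h₁ γ₂ h₂ hP => ?_⟩⟩
  rw [(hF γ₁ h₁).2, (hF γ₂ h₂).2]
  refine hausdorffDist_curveGraph_le (by positivity) fun t ht => ?_
  calc |F γ₁ t - F γ₂ t| ≤ 3 / N ^ 2 := (hF γ₁ h₁).1.abs_sub_le_of_code_eq (hF γ₂ h₂).1
        (by omega) ((Fintype.equivFin _).injective hP) ht
    _ ≤ 12 / N ^ 2 := by gcongr; norm_num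
end
end

section
/- Let d ≥ 2 and let 1 ≤ k ≤ d−1 be an integer. Every set E ⊂ ℝ^d whose Hausdorff dimension is strictly less than d−k is G(d,k)-tube null. -/
/-! Since `dimH E < d - k`, the `(d - k)`-dimensional Hausdorff measure of `E` vanishes, so `E` is
covered by balls `closedBall (x n) (r n)` with `∑ r n ^ (d - k)` as small as we like. A ball of
radius `r` around `x` lies in the `r`-neighbourhood of any affine `k`-plane through `x`, so the
balls are swallowed by `G(d,k)`-tubes of the same widths. -/

open MeasureTheory Metric Set
open scoped ENNReal NNReal

noncomputable section

/-- `L` is an affine `k`-plane in `ℝ^d`. -/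
def IsAffinePlane (d k : ℕ) (L : Set (Pt d)) : Prop :=
  ∃ V : AffineSubspace ℝ (Pt d), (V : Set (Pt d)).Nonempty ∧
    Module.finrank ℝ V.direction = k ∧ L = (V : Set (Pt d))

/-- A `G(d,k)`-tube of width `w`. -/
def IsGTube (d k : ℕ) (w : ℝ) (T : Set (Pt d)) : Prop :=
  ∃ L : Set (Pt d), IsAffinePlane d k L ∧ T = Metric.cthickening w L

/-- `A` is `G(d,k)`-tube null. -/
def GTubeNull (d k : ℕ) (A : Set (Pt d)) : Prop :=
  ∀ δ : ℝ, 0 < δ → ∃ (T : ℕ → Set (Pt d)) (w : ℕ → ℝ),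
    (∀ n, 0 < w n ∧ IsGTube d k (w n) (T n)) ∧ (A ⊆ ⋃ n, T n) ∧
    ∑' n, ENNReal.ofReal (w n) ^ (d - k) ≤ ENNReal.ofReal δ

theorem Submodule.exists_finrank_eq {K V : Type*} [DivisionRing K] [AddCommGroup V] [Module K V]
    [FiniteDimensional K V] {k : ℕ} (hk : k ≤ Module.finrank K V) :
    ∃ W : Submodule K V, Module.finrank K W = k := by
  obtain ⟨f, hf⟩ := exists_linearIndependent_of_le_rank
    ((Nat.cast_le.2 hk).trans_eq (Module.finrank_eq_rank K V))
  exact ⟨span K (range f), by rw [finrank_span_eq_card hf, Fintype.card_fin]⟩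

theorem exists_isGTube_superset_closedBall {d k : ℕ} (hk : k ≤ d) (x : Pt d) (r : ℝ) :
    ∃ T, IsGTube d k r T ∧ closedBall x r ⊆ T := by
  obtain ⟨W, hW⟩ := Submodule.exists_finrank_eq (K := ℝ) (V := Pt d) (by simpa using hk)
  have hx : x ∈ AffineSubspace.mk' x W := AffineSubspace.self_mem_mk' x W
  exact ⟨_, ⟨_, ⟨_, ⟨x, hx⟩, by rwa [AffineSubspace.direction_mk'], rfl⟩, rfl⟩,
    closedBall_subset_cthickening hx r⟩

theorem exists_cover_tsum_ediam_rpow_lt_of_hausdorffMeasure_eq_zero {X : Type*}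
    [EMetricSpace X] [MeasurableSpace X] [BorelSpace X] {m : ℝ} {s : Set X} {ε : ℝ≥0∞}
    (hm : 0 < m) (hs : μH[m] s = 0) (hε : ε ≠ 0) :
    ∃ t : ℕ → Set X, s ⊆ ⋃ n, t n ∧ ∑' n, ediam (t n) ^ m < ε := by
  rw [Measure.hausdorffMeasure_apply, ENNReal.iSup_eq_zero] at hs
  have hcovers := ENNReal.iSup_eq_zero.1 (hs 1) one_pos ▸ pos_iff_ne_zero.2 hε
  simp only [iInf_lt_iff] at hcovers
  obtain ⟨t, hst, -, hsum⟩ := hcovers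
  refine ⟨t, hst, lt_of_le_of_lt (ENNReal.tsum_le_tsum fun n => ?_) hsum⟩
  rcases (t n).eq_empty_or_nonempty with hempty | hne
  · simp [hempty, ENNReal.zero_rpow_of_pos hm]
  · exact le_iSup_of_le hne le_rfl

theorem exists_closedBall_cover_tsum_rpow_lt_of_hausdorffMeasure_eq_zero {X : Type*}
    [MetricSpace X] [Nonempty X] [MeasurableSpace X] [BorelSpace X] {m : ℝ} {s : Set X}
    {ε : ℝ≥0∞} (hm : 0 < m) (hs : μH[m] s = 0) (hε : ε ≠ 0) :
    ∃ (x : ℕ → X) (r : ℕ → ℝ), (∀ n, 0 < r n) ∧ s ⊆ ⋃ n, closedBall (x n) (r n) ∧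
      ∑' n, ENNReal.ofReal (r n) ^ m < ε := by
  obtain ⟨t, hst, hsum⟩ :=
    exists_cover_tsum_ediam_rpow_lt_of_hausdorffMeasure_eq_zero hm hs (ENNReal.half_pos hε).ne'
  obtain ⟨η, hη, hηsum⟩ := ENNReal.exists_pos_sum_of_countable (ENNReal.half_pos hε).ne' ℕ
  have hfin (n : ℕ) : ediam (t n) ≠ ∞ := by
    have := ENNReal.ne_top_of_tsum_ne_top (hsum.trans_le le_top).ne n
    simp_all [ENNReal.rpow_eq_top_iff]
  have hcenter (n : ℕ) : ∃ x, t n ⊆ closedBall x (ediam (t n)).toReal := by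
    rcases (t n).eq_empty_or_nonempty with hempty | ⟨x, hx⟩
    · exact ⟨Classical.arbitrary X, by simp [hempty]⟩
    · refine ⟨x, fun y hy => ?_⟩
      rw [mem_closedBall, dist_edist]
      exact ENNReal.toReal_mono (hfin n) (edist_le_ediam_of_mem hy hx)
  choose x hx using hcenter
  -- the second radius makes the balls nondegenerate at a cost `η n` in the sum
  set r : ℕ → ℝ := fun n => max (ediam (t n)).toReal ((η n : ℝ) ^ m⁻¹)
  have hpow (n : ℕ) : ENNReal.ofReal (r n) ^ m ≤ ediam (t n) ^ m + η n := by
    rw [ENNReal.ofReal_max, ENNReal.max_rpow hm.le, ENNReal.ofReal_toReal (hfin n),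
      ENNReal.ofReal_rpow_of_nonneg (by positivity) hm.le,
      Real.rpow_inv_rpow (η n).coe_nonneg hm.ne', ENNReal.ofReal_coe_nnreal]
    exact max_le (le_add_right le_rfl) (le_add_left le_rfl)
  refine ⟨x, r, fun n => lt_max_of_lt_right (by have := hη n; positivity), ?_, ?_⟩
  · exact hst.trans (iUnion_mono fun n =>
      (hx n).trans (closedBall_subset_closedBall (le_max_left _ _)))
  · calc ∑' n, ENNReal.ofReal (r n) ^ m
        ≤ ∑' n, (ediam (t n) ^ m + η n) := ENNReal.tsum_le_tsum hpow
      _ = ∑' n, ediam (t n) ^ m + ∑' n, (η n : ℝ≥0∞) := ENNReal.tsum_add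
      _ < ε / 2 + ε / 2 := ENNReal.add_lt_add hsum hηsum
      _ = ε := ENNReal.add_halves ε

theorem statement18_general (d k : ℕ) (E : Set (Pt d)) (hE : dimH E < (d : ℝ≥0∞) - k) :
    GTubeNull d k E := by
  intro δ hδ
  have hkd : k < d := by exact_mod_cast tsub_pos_iff_lt.1 (pos_of_gt hE)
  have hnull : μH[((d - k : ℕ) : ℝ≥0)] E = 0 :=
    hausdorffMeasure_of_dimH_lt (by simpa [ENNReal.natCast_sub] using hE)
  obtain ⟨x, r, hr, hcover, hsum⟩ :=
    exists_closedBall_cover_tsum_rpow_lt_of_hausdorffMeasure_eq_zero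
      (by simpa using hkd) hnull (ENNReal.ofReal_pos.2 hδ).ne'
  choose T hT hballT using fun n => exists_isGTube_superset_closedBall hkd.le (x n) (r n)
  refine ⟨T, r, fun n => ⟨hr n, hT n⟩, hcover.trans (iUnion_mono hballT), ?_⟩
  simpa only [NNReal.coe_natCast, ENNReal.rpow_natCast] using hsum.le

theorem statement18 (d k : ℕ) (hd : 2 ≤ d) (hk1 : 1 ≤ k) (hk2 : k ≤ d - 1)
    (E : Set (Pt d)) (hE : dimH E < (d : ℝ≥0∞) - k) :
    GTubeNull d k E :=
  statement18_general d k E hE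
end
end
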